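/- Let f be a power series in the class K with radius of convergence R which is a clan. Then M_f = lim_{t↑R} m_f(t) < ∞ if and only if f is a polynomial (only finitely many coefficients a_n are nonzero). -/

import Mathlib

open Filter MeasureTheory Topology Real
open scoped ENNReal

noncomputable section

/-- The filter describing `t ↑ R`: `atTop` if `R = ∞`, else approach `R` from below. -/
def nhdsLT (R : ℝ≥0∞) : Filter ℝ :=
  if R = ⊤ then atTop else nhdsWithin R.toReal (Set.Iio R.toReal)

/-- The class `K`: nonnegative coefficients, `a 0 > 0`, some `a n > 0` with `n ≥ 1`,
and radius of convergence exactly `R` (all power-type sums converge for `0 < t < R`,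
and the basic sum diverges for `t > R`). -/
def IsKClass (a : ℕ → ℝ) (R : ℝ≥0∞) : Prop :=
  (∀ n, 0 ≤ a n) ∧ 0 < a 0 ∧ (∃ n, 1 ≤ n ∧ 0 < a n) ∧
  (∀ β t : ℝ, 0 < t → ENNReal.ofReal t < R →
    Summable (fun n : ℕ => (n : ℝ) ^ β * a n * t ^ n)) ∧
  (∀ t : ℝ, 0 < t → R < ENNReal.ofReal t → ¬ Summable (fun n : ℕ => a n * t ^ n))

/-- `f(t) = Σ aₙ tⁿ`. -/
def fsum (a : ℕ → ℝ) (t : ℝ) : ℝ := ∑' n : ℕ, a n * t ^ n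

/-- `E(X_t^β) = (Σ n^β aₙ tⁿ)/f(t)`. -/
def moment (a : ℕ → ℝ) (β : ℝ) (t : ℝ) : ℝ :=
  (∑' n : ℕ, (n : ℝ) ^ β * a n * t ^ n) / fsum a t

/-- The mean `m_f(t) = E(X_t)`. -/
def mf (a : ℕ → ℝ) (t : ℝ) : ℝ := moment a 1 t

/-- The variance `σ_f²(t) = E(X_t²) − m_f(t)²`. -/
def varf (a : ℕ → ℝ) (t : ℝ) : ℝ := moment a 2 t - (mf a t) ^ 2

/-- `σ_f(t)`, the nonnegative square root of the variance. -/
def sigmaf (a : ℕ → ℝ) (t : ℝ) : ℝ := Real.sqrt (varf a t)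

/-- `f` is a clan if `σ_f(t)/m_f(t) → 0` as `t ↑ R`. -/
def IsClan (a : ℕ → ℝ) (R : ℝ≥0∞) : Prop :=
  Tendsto (fun t => sigmaf a t / mf a t) (nhdsLT R) (𝓝 0)

namespace ClanAux

lemma mf_eq (a : ℕ → ℝ) (t : ℝ) :
    mf a t = (∑' n : ℕ, (n : ℝ) * (a n * t ^ n)) / (∑' n : ℕ, a n * t ^ n) := by
  unfold mf moment fsum
  congr 1
  exact tsum_congr fun n => by rw [Real.rpow_one, mul_assoc]

lemma moment_two_eq (a : ℕ → ℝ) (t : ℝ) :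
    moment a 2 t = (∑' n : ℕ, (n : ℝ) ^ 2 * (a n * t ^ n)) / (∑' n : ℕ, a n * t ^ n) := by
  unfold moment fsum
  congr 1
  refine tsum_congr fun n => ?_
  rw [show (2:ℝ) = ((2:ℕ):ℝ) by norm_num, Real.rpow_natCast, mul_assoc]

variable {a : ℕ → ℝ} {t : ℝ}

lemma variance_key (ha : ∀ n, 0 ≤ a n)
    (s0 : Summable (fun n : ℕ => a n * t ^ n))
    (s1 : Summable (fun n : ℕ => (n : ℝ) * (a n * t ^ n)))
    (s2 : Summable (fun n : ℕ => (n : ℝ) ^ 2 * (a n * t ^ n)))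
    (hf : 0 < fsum a t) :
    varf a t * fsum a t = ∑' n : ℕ, ((n : ℝ) - mf a t) ^ 2 * (a n * t ^ n) := by
  classical
  set m := mf a t with hmdef
  have hT0 : fsum a t = ∑' n : ℕ, a n * t ^ n := rfl
  set T0 := ∑' n : ℕ, a n * t ^ n with hT0def
  set T1 := ∑' n : ℕ, (n : ℝ) * (a n * t ^ n) with hT1def
  set T2 := ∑' n : ℕ, (n : ℝ) ^ 2 * (a n * t ^ n) with hT2def
  have hm : m = T1 / T0 := mf_eq a t
  have hvar : varf a t = T2 / T0 - m ^ 2 := by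
    rw [varf, moment_two_eq]
  have hexp : ∀ n : ℕ, ((n : ℝ) - m) ^ 2 * (a n * t ^ n)
      = ((n : ℝ) ^ 2 * (a n * t ^ n) - (2 * m) * ((n : ℝ) * (a n * t ^ n)))
        + m ^ 2 * (a n * t ^ n) := fun n => by ring
  have hsum2 : Summable (fun n : ℕ => (n : ℝ) ^ 2 * (a n * t ^ n)
      - (2 * m) * ((n : ℝ) * (a n * t ^ n))) := s2.sub (s1.mul_left (2 * m))
  have hRHS : (∑' n : ℕ, ((n : ℝ) - m) ^ 2 * (a n * t ^ n))
      = (T2 - (2 * m) * T1) + m ^ 2 * T0 := by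
    rw [tsum_congr hexp, Summable.tsum_add hsum2 (s0.mul_left (m ^ 2)),
      Summable.tsum_sub s2 (s1.mul_left (2 * m)), tsum_mul_left, tsum_mul_left]
  rw [hRHS, hvar, hm, hT0]
  have h0 : T0 ≠ 0 := by rw [← hT0] at *; exact ne_of_gt hf
  field_simp
  ring

lemma g_summable (m : ℝ)
    (s0 : Summable (fun n : ℕ => a n * t ^ n))
    (s1 : Summable (fun n : ℕ => (n : ℝ) * (a n * t ^ n)))
    (s2 : Summable (fun n : ℕ => (n : ℝ) ^ 2 * (a n * t ^ n))) :
    Summable (fun n : ℕ => ((n : ℝ) - m) ^ 2 * (a n * t ^ n)) := by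
  have : Summable (fun n : ℕ => ((n : ℝ) ^ 2 * (a n * t ^ n)
      - (2 * m) * ((n : ℝ) * (a n * t ^ n))) + m ^ 2 * (a n * t ^ n)) :=
    (s2.sub (s1.mul_left (2 * m))).add (s0.mul_left (m ^ 2))
  exact this.congr fun n => by ring

lemma fsum_pos (ha : ∀ n, 0 ≤ a n) (ha0 : 0 < a 0) (ht : 0 ≤ t)
    (s0 : Summable (fun n : ℕ => a n * t ^ n)) : 0 < fsum a t := by
  have h := Summable.le_tsum s0 0 (fun n _ => mul_nonneg (ha n) (pow_nonneg ht n))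
  have h0 : (0:ℝ) < a 0 * t ^ 0 := by simpa using ha0
  exact h0.trans_le h

set_option maxHeartbeats 1000000 in
lemma tail_bound (ha : ∀ n, 0 ≤ a n) (ht : 0 ≤ t)
    (s0 : Summable (fun n : ℕ => a n * t ^ n))
    (s1 : Summable (fun n : ℕ => (n : ℝ) * (a n * t ^ n)))
    (s2 : Summable (fun n : ℕ => (n : ℝ) ^ 2 * (a n * t ^ n)))
    (hf : 0 < fsum a t) (N : ℕ)
    (hN : ∀ n : ℕ, N ≤ n → 1 ≤ ((n : ℝ) - mf a t) ^ 2) :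
    fsum a t ≤ (∑ n ∈ Finset.range N, a n * t ^ n) + varf a t * fsum a t := by
  set m := mf a t
  set v := varf a t with hv
  have sg := g_summable (m := m) s0 s1 s2
  have hsplit := Summable.sum_add_tsum_nat_add (f := fun n => a n * t ^ n) N s0
  have hsplitg := Summable.sum_add_tsum_nat_add
    (f := fun n => ((n : ℝ) - m) ^ 2 * (a n * t ^ n)) N sg
  have htail : (∑' n : ℕ, a (n + N) * t ^ (n + N))
      ≤ ∑' n : ℕ, ((↑(n + N) - m) ^ 2 * (a (n + N) * t ^ (n + N))) :=
    Summable.tsum_le_tsum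
      (fun n => le_mul_of_one_le_left (mul_nonneg (ha _) (pow_nonneg ht _))
        (hN _ (Nat.le_add_left _ _)))
      ((summable_nat_add_iff N).2 s0) ((summable_nat_add_iff N).2 sg)
  have hg0 : 0 ≤ ∑ n ∈ Finset.range N, ((n : ℝ) - m) ^ 2 * (a n * t ^ n) :=
    Finset.sum_nonneg fun n _ => mul_nonneg (sq_nonneg _)
      (mul_nonneg (ha n) (pow_nonneg ht n))
  have hvk : v * fsum a t = ∑' n : ℕ, ((n : ℝ) - m) ^ 2 * (a n * t ^ n) :=
    variance_key ha s0 s1 s2 hf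
  have e1 : fsum a t
      = (∑ n ∈ Finset.range N, a n * t ^ n) + ∑' n : ℕ, a (n + N) * t ^ (n + N) :=
    hsplit.symm
  linarith [hsplitg, htail, e1.le, e1.ge, hvk.le, hvk.ge]

lemma pow_ratio_tendsto {n N : ℕ} (h : n ≤ N) :
    Tendsto (fun t : ℝ => t ^ n / t ^ N) atTop (𝓝 (if n = N then 1 else 0)) := by
  rcases eq_or_lt_of_le h with rfl | hlt
  · rw [if_pos rfl]
    refine Tendsto.congr' ?_ tendsto_const_nhds
    filter_upwards [eventually_gt_atTop (0:ℝ)] with t ht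
    exact (div_self (pow_ne_zero _ ht.ne')).symm
  · rw [if_neg hlt.ne]
    have h1 : Tendsto (fun t : ℝ => (t ^ (N - n))⁻¹) atTop (𝓝 0) :=
      (tendsto_pow_atTop (Nat.sub_ne_zero_of_lt hlt)).inv_tendsto_atTop
    refine Tendsto.congr' ?_ h1
    filter_upwards [eventually_gt_atTop (0:ℝ)] with t ht
    have hNe : t ^ N = t ^ n * t ^ (N - n) := by
      rw [← pow_add]; congr 1; omega
    rw [hNe, div_mul_cancel_left₀ (pow_ne_zero _ ht.ne')]

end ClanAux

open ClanAux

/-- for a clan `f ∈ K`, `M_f = lim_{t↑R} m_f(t) < ∞` if and only if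
`f` is a polynomial. -/
theorem clan_Mf_finite_iff_polynomial (a : ℕ → ℝ) (R : ℝ≥0∞) (hR : 0 < R)
    (hK : IsKClass a R) (hclan : IsClan a R) :
    (∃ M : ℝ, Tendsto (mf a) (nhdsLT R) (𝓝 M)) ↔ {n : ℕ | a n ≠ 0}.Finite := by
  classical
  obtain ⟨ha, ha0, ⟨n₀, hn₀1, hn₀pos⟩, hsumK, hdiv⟩ := hK
  have hs0 : ∀ t : ℝ, 0 < t → ENNReal.ofReal t < R →
      Summable (fun n : ℕ => a n * t ^ n) := fun t ht hlt =>
    (hsumK 0 t ht hlt).congr fun n => by rw [Real.rpow_zero, one_mul]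
  have hs1 : ∀ t : ℝ, 0 < t → ENNReal.ofReal t < R →
      Summable (fun n : ℕ => (n : ℝ) * (a n * t ^ n)) := fun t ht hlt =>
    (hsumK 1 t ht hlt).congr fun n => by rw [Real.rpow_one, mul_assoc]
  have hs2 : ∀ t : ℝ, 0 < t → ENNReal.ofReal t < R →
      Summable (fun n : ℕ => (n : ℝ) ^ 2 * (a n * t ^ n)) := fun t ht hlt =>
    (hsumK 2 t ht hlt).congr fun n => by
      rw [show (2:ℝ) = ((2:ℕ):ℝ) by norm_num, Real.rpow_natCast, mul_assoc]
  constructor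
  · rintro ⟨M, hM⟩
    rw [← Set.not_infinite]
    intro hinf
    have hbase : ∀ᶠ t in nhdsLT R, 0 < t ∧ ENNReal.ofReal t < R := by
      by_cases hRtop : R = ⊤
      · rw [_root_.nhdsLT, if_pos hRtop]
        filter_upwards [eventually_gt_atTop 0] with t ht
        exact ⟨ht, hRtop ▸ ENNReal.ofReal_lt_top⟩
      · rw [_root_.nhdsLT, if_neg hRtop]
        have hr : 0 < R.toReal := ENNReal.toReal_pos hR.ne' hRtop
        filter_upwards [Ioo_mem_nhdsLT (half_lt_self hr)] with t ht
        have ht0 : 0 < t := lt_trans (half_pos hr) ht.1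
        exact ⟨ht0, (ENNReal.ofReal_lt_iff_lt_toReal ht0.le hRtop).2 ht.2⟩
    have hmf_pos : ∀ᶠ t in nhdsLT R, 0 < mf a t := by
      filter_upwards [hbase] with t htb
      obtain ⟨ht, hlt⟩ := htb
      have hf := fsum_pos ha ha0 ht.le (hs0 t ht hlt)
      have hT1 : 0 < ∑' n : ℕ, (n : ℝ) * (a n * t ^ n) := by
        have hle := Summable.le_tsum (hs1 t ht hlt) n₀ (fun n _ =>
          mul_nonneg (Nat.cast_nonneg n) (mul_nonneg (ha n) (pow_nonneg ht.le n)))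
        have hpos : (0:ℝ) < (n₀ : ℝ) * (a n₀ * t ^ n₀) := by
          have : (0:ℝ) < (n₀ : ℝ) := by exact_mod_cast hn₀1
          positivity
        exact hpos.trans_le hle
      rw [mf_eq]
      exact div_pos hT1 hf
    have hvar_nonneg : ∀ᶠ t in nhdsLT R, 0 ≤ varf a t := by
      filter_upwards [hbase] with t htb
      obtain ⟨ht, hlt⟩ := htb
      have hf := fsum_pos ha ha0 ht.le (hs0 t ht hlt)
      have hkey := variance_key ha (hs0 t ht hlt) (hs1 t ht hlt) (hs2 t ht hlt) hf
      have hnn : 0 ≤ ∑' n : ℕ, ((n : ℝ) - mf a t) ^ 2 * (a n * t ^ n) :=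
        tsum_nonneg fun n => mul_nonneg (sq_nonneg _)
          (mul_nonneg (ha n) (pow_nonneg ht.le n))
      nlinarith
    have hσ0 : Tendsto (sigmaf a) (nhdsLT R) (𝓝 0) := by
      have heq : (fun t => sigmaf a t / mf a t * mf a t) =ᶠ[nhdsLT R] sigmaf a := by
        filter_upwards [hmf_pos] with t ht
        field_simp
      have h2 := hclan.mul hM
      rw [zero_mul] at h2
      exact Tendsto.congr' heq h2
    have hvar0 : Tendsto (varf a) (nhdsLT R) (𝓝 0) := by
      have heq : (fun t => sigmaf a t ^ 2) =ᶠ[nhdsLT R] varf a := by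
        filter_upwards [hvar_nonneg] with t ht
        exact Real.sq_sqrt ht
      have h2 : Tendsto (fun t => sigmaf a t ^ 2) (nhdsLT R) (𝓝 0) := by
        simpa using hσ0.pow 2
      exact Tendsto.congr' heq h2
    set K : ℕ := ⌈M⌉₊ + 1 with hKdef
    set N : ℕ := K + 1 with hNdef
    have hMK : M + 1/2 < (K : ℝ) := by
      have := Nat.le_ceil M
      have : M ≤ (⌈M⌉₊ : ℝ) := this
      push_cast [hKdef]
      linarith
    have hm_lt : ∀ᶠ t in nhdsLT R, mf a t < M + 1/2 :=
      hM.eventually_lt_const (by linarith)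
    have hsep : ∀ᶠ t in nhdsLT R, ∀ n : ℕ, N ≤ n → 1 ≤ ((n : ℝ) - mf a t) ^ 2 := by
      filter_upwards [hm_lt, hmf_pos] with t h1 _ n hn
      have hn' : (K : ℝ) + 1 ≤ (n : ℝ) := by exact_mod_cast hn
      nlinarith
    have hvar_half : ∀ᶠ t in nhdsLT R, varf a t < 1/2 :=
      hvar0.eventually_lt_const (by norm_num)
    have hfP : ∀ᶠ t in nhdsLT R,
        fsum a t ≤ 2 * ∑ n ∈ Finset.range N, a n * t ^ n := by
      filter_upwards [hbase, hsep, hvar_half] with t htb hsept hvh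
      obtain ⟨ht, hlt⟩ := htb
      have hf := fsum_pos ha ha0 ht.le (hs0 t ht hlt)
      have := tail_bound ha ht.le (hs0 t ht hlt) (hs1 t ht hlt) (hs2 t ht hlt) hf N hsept
      nlinarith
    obtain ⟨n₁, hn₁mem, hn₁⟩ := hinf.exists_gt N
    have han₁ : 0 < a n₁ := lt_of_le_of_ne (ha n₁) (Ne.symm hn₁mem)
    have hn₁1 : 1 ≤ n₁ := le_trans (by omega) hn₁.le
    by_cases hRtop : R = ⊤
    · -- R = ∞ : contradiction via linear growth of the mean
      have hL : nhdsLT R = atTop := by rw [_root_.nhdsLT, if_pos hRtop]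
      set A := ∑ n ∈ Finset.range N, a n with hA
      have hApos : 0 < A := by
        have h0A : a 0 ≤ A :=
          Finset.single_le_sum (f := fun n => a n) (fun i _ => ha i)
            (Finset.mem_range.2 (Nat.succ_pos _))
        linarith
      have key : ∀ᶠ t in nhdsLT R, a n₁ / (2 * A) * t ≤ mf a t := by
        rw [hL]
        rw [hL] at hbase hfP
        filter_upwards [hbase, hfP, eventually_ge_atTop (1:ℝ)] with t htb hfPt ht1
        obtain ⟨ht, hlt⟩ := htb
        have hT0pos := fsum_pos ha ha0 ht.le (hs0 t ht hlt)
        have hPA : (∑ n ∈ Finset.range N, a n * t ^ n) ≤ A * t ^ (N - 1) := by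
          rw [hA, Finset.sum_mul]
          refine Finset.sum_le_sum fun n hn => ?_
          have hnN : n ≤ N - 1 := by
            have := Finset.mem_range.1 hn; omega
          exact mul_le_mul_of_nonneg_left (pow_le_pow_right₀ ht1 hnN) (ha n)
        have hT0pos' : 0 < ∑' n : ℕ, a n * t ^ n := hT0pos
        rw [mf_eq, le_div_iff₀ hT0pos']
        have hePow : t ^ (N - 1) * t = t ^ N := by
          have hh : N - 1 + 1 = N := by omega
          conv_rhs => rw [← hh, pow_succ]
        calc a n₁ / (2 * A) * t * (∑' n : ℕ, a n * t ^ n)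
            ≤ a n₁ / (2 * A) * t * (2 * (A * t ^ (N - 1))) := by
              refine mul_le_mul_of_nonneg_left ?_ (by positivity)
              calc (∑' n : ℕ, a n * t ^ n) = fsum a t := rfl
                _ ≤ 2 * ∑ n ∈ Finset.range N, a n * t ^ n := hfPt
                _ ≤ 2 * (A * t ^ (N - 1)) := by linarith
          _ = a n₁ * (t ^ (N - 1) * t) := by field_simp <;> ring
          _ = a n₁ * t ^ N := by rw [hePow]
          _ ≤ a n₁ * t ^ n₁ :=
              mul_le_mul_of_nonneg_left (pow_le_pow_right₀ ht1 hn₁.le) han₁.le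
          _ ≤ (n₁ : ℝ) * (a n₁ * t ^ n₁) := by
              refine le_mul_of_one_le_left (by positivity) ?_
              exact_mod_cast hn₁1
          _ ≤ ∑' n : ℕ, (n : ℝ) * (a n * t ^ n) :=
              Summable.le_tsum (hs1 t ht hlt) n₁ (fun n _ =>
                mul_nonneg (Nat.cast_nonneg n)
                  (mul_nonneg (ha n) (pow_nonneg ht.le n)))
      have hfalse : ∀ᶠ t in nhdsLT R, False := by
        rw [hL]
        rw [hL] at key hm_lt
        filter_upwards [key, hm_lt,
          eventually_gt_atTop ((M + 1/2) * (2 * A) / a n₁)] with t h1 h2 h3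
        have h4 : a n₁ / (2 * A) * t < M + 1/2 := lt_of_le_of_lt h1 h2
        have h5 : a n₁ * t < (M + 1/2) * (2 * A) := by
          have he : a n₁ * t = a n₁ / (2 * A) * t * (2 * A) := by field_simp <;> ring
          rw [he]
          exact mul_lt_mul_of_pos_right h4 (by positivity)
        have h6 : (M + 1/2) * (2 * A) < t * a n₁ := (div_lt_iff₀ han₁).1 h3
        nlinarith
      rw [hL] at hfalse
      exact hfalse.exists.choose_spec
    · -- R < ∞ : contradiction via concentration
      have hr : 0 < R.toReal := ENNReal.toReal_pos hR.ne' hRtop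
      have hL : nhdsLT R = nhdsWithin R.toReal (Set.Iio R.toReal) := by
        rw [_root_.nhdsLT, if_neg hRtop]
      set r := R.toReal with hrdef
      set A := ∑ n ∈ Finset.range N, a n * r ^ n with hA
      have hApos : 0 < A := by
        have h0A : a 0 * r ^ 0 ≤ A :=
          Finset.single_le_sum (f := fun n => a n * r ^ n)
            (fun i _ => mul_nonneg (ha i) (pow_nonneg hr.le i))
            (Finset.mem_range.2 (Nat.succ_pos _))
        have : (0:ℝ) < a 0 * r ^ 0 := by simpa using ha0
        linarith
      set ε := a n₁ * (r / 2) ^ n₁ with hε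
      have hεpos : 0 < ε := by positivity
      have hvs : ∀ᶠ t in nhdsLT R, varf a t < ε / (4 * A) :=
        hvar0.eventually_lt_const (by positivity)
      have hIoo : ∀ᶠ t in nhdsLT R, t ∈ Set.Ioo (r / 2) r := by
        rw [hL]
        exact Ioo_mem_nhdsLT (half_lt_self hr)
      have hfalse : ∀ᶠ t in nhdsLT R, False := by
        filter_upwards [hbase, hsep, hvs, hIoo, hfP, hvar_nonneg] with t htb hsept
          hvst hIoot hfPt hvnt
        obtain ⟨ht, hlt⟩ := htb
        have hT0pos := fsum_pos ha ha0 ht.le (hs0 t ht hlt)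
        have hP : (∑ n ∈ Finset.range N, a n * t ^ n) ≤ A := by
          rw [hA]
          exact Finset.sum_le_sum fun n _ =>
            mul_le_mul_of_nonneg_left (pow_le_pow_left₀ ht.le hIoot.2.le n) (ha n)
        have hf2A : fsum a t ≤ 2 * A := le_trans hfPt (by linarith)
        have hcheb : ((n₁ : ℝ) - mf a t) ^ 2 * (a n₁ * t ^ n₁)
            ≤ varf a t * fsum a t := by
          rw [variance_key ha (hs0 t ht hlt) (hs1 t ht hlt) (hs2 t ht hlt) hT0pos]
          exact Summable.le_tsum (g_summable _ (hs0 t ht hlt) (hs1 t ht hlt) (hs2 t ht hlt))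
            n₁ (fun n _ => mul_nonneg (sq_nonneg _)
              (mul_nonneg (ha n) (pow_nonneg ht.le n)))
        have h1 : 1 ≤ ((n₁ : ℝ) - mf a t) ^ 2 := hsept n₁ hn₁.le
        have hεt : ε ≤ a n₁ * t ^ n₁ := by
          rw [hε]
          exact mul_le_mul_of_nonneg_left
            (pow_le_pow_left₀ (by positivity) hIoot.1.le n₁) han₁.le
        have hstep : a n₁ * t ^ n₁ ≤ ((n₁ : ℝ) - mf a t) ^ 2 * (a n₁ * t ^ n₁) :=
          le_mul_of_one_le_left (by positivity) h1
        have hvf : varf a t * fsum a t ≤ ε / (4 * A) * (2 * A) := by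
          have := mul_le_mul hvst.le hf2A hT0pos.le (by positivity)
          linarith
        have : ε / (4 * A) * (2 * A) = ε / 2 := by field_simp; ring
        linarith
      rw [hL] at hfalse
      exact hfalse.exists.choose_spec
  · intro hfin
    have hRtop : R = ⊤ := by
      by_contra hne
      have ht : (0:ℝ) < R.toReal + 1 := by positivity
      have hlt : R < ENNReal.ofReal (R.toReal + 1) := by
        conv_lhs => rw [← ENNReal.ofReal_toReal hne]
        exact (ENNReal.ofReal_lt_ofReal_iff ht).2 (lt_add_one _)
      refine hdiv _ ht hlt (summable_of_ne_finset_zero (s := hfin.toFinset)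
        fun n hn => ?_)
      have han : a n = 0 := not_not.1 fun h => hn (hfin.mem_toFinset.2 h)
      simp [han]
    set s := hfin.toFinset with hs
    have h0s : 0 ∈ s := hfin.mem_toFinset.2 (ne_of_gt ha0)
    set Nd := s.max' ⟨0, h0s⟩ with hNd
    have hNds : Nd ∈ s := s.max'_mem _
    have haNd : 0 < a Nd := lt_of_le_of_ne (ha Nd) (Ne.symm (hfin.mem_toFinset.1 hNds))
    refine ⟨(Nd : ℝ), ?_⟩
    have hL : nhdsLT R = atTop := by rw [_root_.nhdsLT, if_pos hRtop]
    rw [hL]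
    have hzero : ∀ n : ℕ, n ∉ s → a n = 0 := fun n hn =>
      not_not.1 fun h => hn (hfin.mem_toFinset.2 h)
    have hnum : Tendsto (fun t : ℝ => ∑ n ∈ s, (n : ℝ) * a n * (t ^ n / t ^ Nd))
        atTop (𝓝 ((Nd : ℝ) * a Nd)) := by
      have h : Tendsto (fun t : ℝ => ∑ n ∈ s, (n : ℝ) * a n * (t ^ n / t ^ Nd))
          atTop (𝓝 (∑ n ∈ s, (n : ℝ) * a n * (if n = Nd then (1:ℝ) else 0))) :=
        tendsto_finset_sum s (fun n hn =>
          ((pow_ratio_tendsto (s.le_max' n hn)).const_mul ((n : ℝ) * a n)))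
      have hval : (∑ n ∈ s, (n : ℝ) * a n * (if n = Nd then (1:ℝ) else 0))
          = (Nd : ℝ) * a Nd := by
        rw [Finset.sum_congr rfl (fun n _ => by
          rw [mul_ite, mul_one, mul_zero]), Finset.sum_ite_eq' s Nd
          (fun n => (n : ℝ) * a n), if_pos hNds]
      rw [← hval]
      exact h
    have hden : Tendsto (fun t : ℝ => ∑ n ∈ s, a n * (t ^ n / t ^ Nd))
        atTop (𝓝 (a Nd)) := by
      have h : Tendsto (fun t : ℝ => ∑ n ∈ s, a n * (t ^ n / t ^ Nd))
          atTop (𝓝 (∑ n ∈ s, a n * (if n = Nd then (1:ℝ) else 0))) :=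
        tendsto_finset_sum s (fun n hn =>
          ((pow_ratio_tendsto (s.le_max' n hn)).const_mul (a n)))
      have hval : (∑ n ∈ s, a n * (if n = Nd then (1:ℝ) else 0)) = a Nd := by
        rw [Finset.sum_congr rfl (fun n _ => by
          rw [mul_ite, mul_one, mul_zero]), Finset.sum_ite_eq' s Nd
          (fun n => a n), if_pos hNds]
      rw [← hval]
      exact h
    have hratio := hnum.div hden (ne_of_gt haNd)
    have hlim : (Nd : ℝ) * a Nd / a Nd = (Nd : ℝ) := by
      field_simp
    rw [hlim] at hratio
    refine Tendsto.congr' ?_ hratio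
    filter_upwards [eventually_gt_atTop (0:ℝ)] with t ht
    have htN : t ^ Nd ≠ 0 := pow_ne_zero _ ht.ne'
    have hT0 : (∑' n : ℕ, a n * t ^ n) = ∑ n ∈ s, a n * t ^ n :=
      tsum_eq_sum fun n hn => by rw [hzero n hn, zero_mul]
    have hT1 : (∑' n : ℕ, (n : ℝ) * (a n * t ^ n))
        = ∑ n ∈ s, (n : ℝ) * (a n * t ^ n) :=
      tsum_eq_sum fun n hn => by rw [hzero n hn]; ring
    have hdenpos : 0 < ∑ n ∈ s, a n * t ^ n := by
      have h0t : (0:ℝ) < a 0 * t ^ 0 := by simpa using ha0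
      exact lt_of_lt_of_le h0t (Finset.single_le_sum
        (fun i _ => mul_nonneg (ha i) (pow_nonneg ht.le i)) h0s)
    have e1 : (∑ n ∈ s, (n : ℝ) * a n * (t ^ n / t ^ Nd))
        = (∑ n ∈ s, (n : ℝ) * (a n * t ^ n)) / t ^ Nd := by
      rw [Finset.sum_div]
      exact Finset.sum_congr rfl fun n _ => by ring
    have e2 : (∑ n ∈ s, a n * (t ^ n / t ^ Nd))
        = (∑ n ∈ s, a n * t ^ n) / t ^ Nd := by
      rw [Finset.sum_div]
      exact Finset.sum_congr rfl fun n _ => by ring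
    rw [Pi.div_apply, e1, e2, div_div_div_cancel_right₀ htN, mf_eq, hT0, hT1]
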